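/- arXiv:1407.3263 — 6 statements merged into one kernel-verified Lean document; each statement's English description precedes it below -/
import Mathlib

section
/- For every x ∈ [0,1]^{F×D} and y ∈ [0,1]^F, MFN(g,x,y) is feasible for every valid partial assignment g if and only if MFN(ĝ,x,y) is feasible for every valid partial assignment ĝ that is integral. -/
/-!
Formalization of statements from "An LP-rounding approach to capacitated facility location".

`F` is the (finite) type of facilities, `D` the type of clients, `U i` the (positive integer)
capacity of facility `i`.  The multi-commodity flow network `MFN(g, x, y)` has nodes
`j^s, j^t` for clients `j` and `i, i'` for facilities `i`; its arcs and capacities are as in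
`MFNArc` / `mfnCap` below.
-/

open scoped BigOperators Classical

/-- Arcs of the multi-commodity flow network `MFN`:
`mid i` is the arc `(i, i')`, `sx j i` is `(j^s, i)`, `gs i j` is `(i, j^s)`,
and `ft i j` is `(i', j^t)`. -/
inductive MFNArc (F D : Type) where
  | mid : F → MFNArc F D
  | sx  : D → F → MFNArc F D
  | gs  : F → D → MFNArc F D
  | ft  : F → D → MFNArc F D
  deriving DecidableEq, Fintype

/-- Nodes of the multi-commodity flow network `MFN`. -/
inductive MFNNode (F D : Type) where
  | src  : D → MFNNode F D
  | fac  : F → MFNNode F D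
  | fac' : F → MFNNode F D
  | sink : D → MFNNode F D
  deriving DecidableEq

variable {F D : Type}

/-- Tail (start node) of an arc. -/
def MFNArc.tail : MFNArc F D → MFNNode F D
  | .mid i => .fac i
  | .sx j _ => .src j
  | .gs i _ => .fac i
  | .ft i _ => .fac' i

/-- Head (end node) of an arc. -/
def MFNArc.head : MFNArc F D → MFNNode F D
  | .mid i => .fac' i
  | .sx _ i => .fac i
  | .gs _ j => .src j
  | .ft _ j => .sink j

variable [Fintype F] [Fintype D]

/-- Capacity of each arc of `MFN(g, x, y)`; the demand of client `j` is
`d j = 1 - ∑ i, g i j`. -/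
noncomputable def mfnCap (U : F → ℕ) (g x : F → D → ℝ) (y : F → ℝ) : MFNArc F D → ℝ
  | .mid i  => y i * ((U i : ℝ) - ∑ j, g i j)
  | .sx j i => x i j
  | .gs i j => g i j
  | .ft i j => y i * (1 - ∑ i', g i' j)

/-- Net outflow of a (single-commodity) flow `f` at node `v`. -/
noncomputable def netOutflow (f : MFNArc F D → ℝ) (v : MFNNode F D) : ℝ :=
  ∑ a ∈ Finset.univ.filter (fun a : MFNArc F D => a.tail = v), f a -
    ∑ a ∈ Finset.univ.filter (fun a : MFNArc F D => a.head = v), f a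

/-- `f = (f_j)_{j ∈ D}` is a feasible multi-commodity flow for `MFN(g, x, y)`:
each `f_j` is nonnegative, conserves flow at every node other than `j^s` and `j^t`,
has net outflow `d j = 1 - ∑ i, g i j` at `j^s`, and the total flow on every arc is
at most its capacity. -/
def IsFeasibleFlow (U : F → ℕ) (g x : F → D → ℝ) (y : F → ℝ)
    (f : D → MFNArc F D → ℝ) : Prop :=
  (∀ j a, 0 ≤ f j a) ∧
  (∀ (j : D) (v : MFNNode F D), v ≠ MFNNode.src j → v ≠ MFNNode.sink j →
      netOutflow (f j) v = 0) ∧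
  (∀ j : D, netOutflow (f j) (MFNNode.src j) = 1 - ∑ i, g i j) ∧
  (∀ a : MFNArc F D, ∑ j, f j a ≤ mfnCap U g x y a)

/-- The multi-commodity flow network `MFN(g, x, y)` is feasible. -/
def MFNFeasible (U : F → ℕ) (g x : F → D → ℝ) (y : F → ℝ) : Prop :=
  ∃ f : D → MFNArc F D → ℝ, IsFeasibleFlow U g x y f

/-- `g` is a valid partial (fractional) assignment of clients to facilities. -/
def ValidAssign (U : F → ℕ) (g : F → D → ℝ) : Prop :=
  (∀ i j, 0 ≤ g i j) ∧ (∀ j, ∑ i, g i j ≤ 1) ∧ (∀ i, ∑ j, g i j ≤ (U i : ℝ))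


/-!
Feasibility of `MFN(g, x, y)` is a convex condition on `g`: all capacities and demands are affine
in `g`, so a convex combination of feasible flows is feasible for the combined assignment. It
therefore suffices that every valid assignment is a convex combination of integral ones.
Split facility `i` into `U i` unit-capacity slots, each receiving `g i j / U i` of client `j`.
Padding with the free capacity of each slot and the unassigned demand of each client gives the
symmetric doubly stochastic matrix
`[[diag (1 - ∑ j, g i j / U i), G], [Gᵀ, diag (1 - ∑ i, g i j)]]`.
By Birkhoff's theorem it is a convex combination of permutation matrices; summing the slot–client
block over the slots of each facility sends it back to `g` and each permutation matrix to an
integral valid assignment.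
-/

section Convexity

variable (U : F → ℕ) (x : F → D → ℝ) (y : F → ℝ)

lemma netOutflow_add (f f' : MFNArc F D → ℝ) (v : MFNNode F D) :
    netOutflow (f + f') v = netOutflow f v + netOutflow f' v := by
  simp only [netOutflow, Pi.add_apply, Finset.sum_add_distrib]
  ring

lemma netOutflow_smul (a : ℝ) (f : MFNArc F D → ℝ) (v : MFNNode F D) :
    netOutflow (a • f) v = a * netOutflow f v := by
  simp only [netOutflow, Pi.smul_apply, smul_eq_mul, ← Finset.mul_sum]
  ring

lemma mfnCap_add_smul {a b : ℝ} (hab : a + b = 1) (g₁ g₂ : F → D → ℝ) (e : MFNArc F D) :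
    mfnCap U (a • g₁ + b • g₂) x y e = a * mfnCap U g₁ x y e + b * mfnCap U g₂ x y e := by
  obtain rfl : b = 1 - a := by linarith
  cases e <;>
    simp only [mfnCap, Pi.add_apply, Pi.smul_apply, smul_eq_mul, Finset.sum_add_distrib,
      ← Finset.mul_sum] <;>
    ring

lemma IsFeasibleFlow.add_smul {g₁ g₂ : F → D → ℝ} {f₁ f₂ : D → MFNArc F D → ℝ}
    (h₁ : IsFeasibleFlow U g₁ x y f₁) (h₂ : IsFeasibleFlow U g₂ x y f₂)
    {a b : ℝ} (ha : 0 ≤ a) (hb : 0 ≤ b) (hab : a + b = 1) :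
    IsFeasibleFlow U (a • g₁ + b • g₂) x y (a • f₁ + b • f₂) := by
  obtain ⟨hnn₁, hcons₁, hdem₁, hcap₁⟩ := h₁
  obtain ⟨hnn₂, hcons₂, hdem₂, hcap₂⟩ := h₂
  refine ⟨fun j e => ?_, fun j v hs ht => ?_, fun j => ?_, fun e => ?_⟩
  · simp only [Pi.add_apply, Pi.smul_apply, smul_eq_mul]
    exact add_nonneg (mul_nonneg ha (hnn₁ j e)) (mul_nonneg hb (hnn₂ j e))
  · simp only [Pi.add_apply, Pi.smul_apply, netOutflow_add, netOutflow_smul,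
      hcons₁ j v hs ht, hcons₂ j v hs ht]
    ring
  · obtain rfl : b = 1 - a := by linarith
    simp only [Pi.add_apply, Pi.smul_apply, netOutflow_add, netOutflow_smul, hdem₁, hdem₂,
      smul_eq_mul, Finset.sum_add_distrib, ← Finset.mul_sum]
    ring
  · calc ∑ j, (a • f₁ + b • f₂) j e = a * ∑ j, f₁ j e + b * ∑ j, f₂ j e := by
          simp only [Pi.add_apply, Pi.smul_apply, smul_eq_mul, Finset.sum_add_distrib,
            ← Finset.mul_sum]
      _ ≤ a * mfnCap U g₁ x y e + b * mfnCap U g₂ x y e := by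
          gcongr
          exacts [hcap₁ e, hcap₂ e]
      _ = mfnCap U (a • g₁ + b • g₂) x y e := (mfnCap_add_smul U x y hab g₁ g₂ e).symm

lemma convex_setOf_mfnFeasible : Convex ℝ {g : F → D → ℝ | MFNFeasible U g x y} := by
  rintro g₁ ⟨f₁, h₁⟩ g₂ ⟨f₂, h₂⟩ a b ha hb hab
  exact ⟨a • f₁ + b • f₂, h₁.add_smul U x y h₂ ha hb hab⟩

end Convexity

section Slots

variable (U : F → ℕ)

abbrev CapacitySlot := Σ i : F, Fin (U i)

variable {U}

lemma ValidAssign.cap_mul_div {g : F → D → ℝ} (hg : ValidAssign U g) (i : F) (j : D) :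
    (U i : ℝ) * (g i j / U i) = g i j := by
  rcases eq_or_ne (U i : ℝ) 0 with hU | hU
  · have hle : g i j ≤ 0 := hU ▸ (Finset.single_le_sum (fun j _ => hg.1 i j)
      (Finset.mem_univ j)).trans (hg.2.2 i)
    simp [hU, le_antisymm hle (hg.1 i j)]
  · exact mul_div_cancel₀ _ hU

lemma ValidAssign.sum_slot_div {g : F → D → ℝ} (hg : ValidAssign U g) (j : D) :
    ∑ s : CapacitySlot U, g s.1 j / U s.1 = ∑ i, g i j := by
  simp only [Fintype.sum_sigma, Finset.sum_const, Finset.card_univ, Fintype.card_fin,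
    nsmul_eq_mul, hg.cap_mul_div]

variable (U)

noncomputable def slotMatrix (g : F → D → ℝ) :
    Matrix (CapacitySlot U ⊕ D) (CapacitySlot U ⊕ D) ℝ :=
  Matrix.fromBlocks (Matrix.diagonal fun s => 1 - (∑ j, g s.1 j) / U s.1)
    (Matrix.of fun s j => g s.1 j / U s.1) (Matrix.of fun j s => g s.1 j / U s.1)
    (Matrix.diagonal fun j => 1 - ∑ i, g i j)

lemma isSymm_slotMatrix (g : F → D → ℝ) : (slotMatrix U g).IsSymm :=
  .fromBlocks (Matrix.isSymm_diagonal _) rfl (Matrix.isSymm_diagonal _)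

lemma slotMatrix_mem_doublyStochastic {g : F → D → ℝ} (hg : ValidAssign U g) :
    slotMatrix U g ∈ doublyStochastic ℝ (CapacitySlot U ⊕ D) := by
  have hrow : ∀ a, ∑ b, slotMatrix U g a b = 1 := by
    rintro (s | j)
    · simp [slotMatrix, Fintype.sum_sum_type, Matrix.diagonal_apply, ← Finset.sum_div]
    · simp [slotMatrix, Fintype.sum_sum_type, Matrix.diagonal_apply, hg.sum_slot_div j]
  obtain ⟨hg_nonneg, hg_client, hg_cap⟩ := hg
  refine mem_doublyStochastic_iff_sum.2 ⟨?_, hrow, fun b => ?_⟩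
  · rintro (s | j) (s' | j')
    · simp only [slotMatrix, Matrix.fromBlocks_apply₁₁, Matrix.diagonal_apply]
      split_ifs
      · exact sub_nonneg.2 (div_le_one_of_le₀ (hg_cap s.1) (Nat.cast_nonneg _))
      · exact le_rfl
    · exact div_nonneg (hg_nonneg _ _) (Nat.cast_nonneg _)
    · exact div_nonneg (hg_nonneg _ _) (Nat.cast_nonneg _)
    · simp only [slotMatrix, Matrix.fromBlocks_apply₂₂, Matrix.diagonal_apply]
      split_ifs
      · exact sub_nonneg.2 (hg_client j)
      · exact le_rfl
  · simpa only [(isSymm_slotMatrix U g).apply] using hrow b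

def slotProj : Matrix (CapacitySlot U ⊕ D) (CapacitySlot U ⊕ D) ℝ →ₗ[ℝ] (F → D → ℝ) where
  toFun M i j := ∑ k : Fin (U i), M (.inl ⟨i, k⟩) (.inr j)
  map_add' M N := by
    ext i j
    simp [Finset.sum_add_distrib]
  map_smul' c M := by
    ext i j
    simp [Finset.mul_sum]

variable {U}

omit [Fintype F] [Fintype D] in
@[simp]
lemma slotProj_apply (M : Matrix (CapacitySlot U ⊕ D) (CapacitySlot U ⊕ D) ℝ) (i : F) (j : D) :
    slotProj U M i j = ∑ k : Fin (U i), M (.inl ⟨i, k⟩) (.inr j) :=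
  rfl

lemma slotProj_slotMatrix {g : F → D → ℝ} (hg : ValidAssign U g) :
    slotProj U (slotMatrix U g) = g := by
  ext i j
  simp [slotProj, slotMatrix, hg.cap_mul_div]

lemma validAssign_slotProj {M : Matrix (CapacitySlot U ⊕ D) (CapacitySlot U ⊕ D) ℝ}
    (hM : M ∈ doublyStochastic ℝ (CapacitySlot U ⊕ D)) : ValidAssign U (slotProj U M) := by
  obtain ⟨hM_nonneg, hM_row, hM_col⟩ := mem_doublyStochastic_iff_sum.1 hM
  refine ⟨fun i j => ?_, fun j => ?_, fun i => ?_⟩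
  · rw [slotProj_apply]
    exact Finset.sum_nonneg fun k _ => hM_nonneg _ _
  · calc ∑ i, slotProj U M i j = ∑ s : CapacitySlot U, M (.inl s) (.inr j) :=
          (Fintype.sum_sigma fun s : CapacitySlot U => M (.inl s) (.inr j)).symm
      _ ≤ ∑ a, M a (.inr j) := by
          rw [Fintype.sum_sum_type]
          exact le_add_of_nonneg_right (Finset.sum_nonneg fun _ _ => hM_nonneg _ _)
      _ = 1 := hM_col _
  · calc ∑ j, slotProj U M i j = ∑ k : Fin (U i), ∑ j, M (.inl ⟨i, k⟩) (.inr j) := by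
          simp only [slotProj_apply]
          exact Finset.sum_comm
      _ ≤ ∑ _k : Fin (U i), (1 : ℝ) := by
          gcongr with k
          rw [← hM_row (.inl ⟨i, k⟩), Fintype.sum_sum_type]
          exact le_add_of_nonneg_left (Finset.sum_nonneg fun _ _ => hM_nonneg _ _)
      _ = U i := by simp

omit [Fintype F] [Fintype D] in
lemma slotProj_permMatrix_eq_zero_or_one (σ : Equiv.Perm (CapacitySlot U ⊕ D)) (i : F) (j : D) :
    slotProj U (σ.permMatrix ℝ) i j = 0 ∨ slotProj U (σ.permMatrix ℝ) i j = 1 := by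
  have hcard : (Finset.univ.filter fun k : Fin (U i) => σ (.inl ⟨i, k⟩) = .inr j).card ≤ 1 :=
    Finset.card_le_one.2 fun k hk k' hk' => by
      simp only [Finset.mem_filter] at hk hk'
      simpa using σ.injective (hk.2.trans hk'.2.symm)
  simp only [slotProj_apply, Equiv.Perm.permMatrix,
    PEquiv.toMatrix_apply, Equiv.toPEquiv_apply, Option.mem_def, Option.some.injEq,
    Finset.sum_boole]
  interval_cases (Finset.univ.filter fun k : Fin (U i) => σ (.inl ⟨i, k⟩) = .inr j).card <;>
    simp

theorem ValidAssign.mem_convexHull_integral {g : F → D → ℝ} (hg : ValidAssign U g) :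
    g ∈ convexHull ℝ {h | ValidAssign U h ∧ ∀ i j, h i j = 0 ∨ h i j = 1} := by
  set perms := {σ.permMatrix ℝ | σ : Equiv.Perm (CapacitySlot U ⊕ D)}
  have hM : slotMatrix U g ∈ convexHull ℝ perms := by
    rw [← doublyStochastic_eq_convexHull_permMatrix]
    exact slotMatrix_mem_doublyStochastic U hg
  have hg_hull : g ∈ convexHull ℝ (slotProj U '' perms) := by
    rw [← LinearMap.image_convexHull]
    exact ⟨_, hM, slotProj_slotMatrix hg⟩
  refine convexHull_mono ?_ hg_hull
  rintro _ ⟨_, ⟨σ, rfl⟩, rfl⟩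
  exact ⟨validAssign_slotProj permMatrix_mem_doublyStochastic,
    slotProj_permMatrix_eq_zero_or_one σ⟩

end Slots

theorem stmt_0_general (U : F → ℕ)
    (x : F → D → ℝ) (y : F → ℝ) :
    (∀ g : F → D → ℝ, ValidAssign U g → MFNFeasible U g x y) ↔
      (∀ g : F → D → ℝ, ValidAssign U g → (∀ i j, g i j = 0 ∨ g i j = 1) →
        MFNFeasible U g x y) := by
  refine ⟨fun h g hg _ => h g hg, fun h g hg => ?_⟩
  exact convexHull_min (fun g' hg' => h g' hg'.1 hg'.2) (convex_setOf_mfnFeasible U x y)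
    hg.mem_convexHull_integral

/-- `MFN(g, x, y)` is feasible for every valid partial assignment `g`
iff it is feasible for every valid partial assignment that is integral. -/
theorem stmt_0 (U : F → ℕ) (hU : ∀ i, 0 < U i)
    (x : F → D → ℝ) (y : F → ℝ)
    (hx : ∀ i j, 0 ≤ x i j ∧ x i j ≤ 1) (hy : ∀ i, 0 ≤ y i ∧ y i ≤ 1) :
    (∀ g : F → D → ℝ, ValidAssign U g → MFNFeasible U g x y) ↔
      (∀ g : F → D → ℝ, ValidAssign U g → (∀ i j, g i j = 0 ∨ g i j = 1) →
        MFNFeasible U g x y) :=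
  stmt_0_general U x y
end

section
/- Let x ∈ [0,1]^{F×D} and y ∈ [0,1]^F, let ĝ^1,…,ĝ^r be valid partial assignments, and let λ_1,…,λ_r ≥ 0 with Σ_{k=1}^r λ_k = 1; set g = Σ_{k=1}^r λ_k·ĝ^k. If MFN(ĝ^k,x,y) is feasible for every k = 1,…,r, then g is a valid partial assignment and MFN(g,x,y) is feasible. -/
/-!
Formalization of statements from "An LP-rounding approach to capacitated facility location".

`F` is the (finite) type of facilities, `D` the type of clients, `U i` the (positive integer)
capacity of facility `i`.  The multi-commodity flow network `MFN(g, x, y)` has nodes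
`j^s, j^t` for clients `j` and `i, i'` for facilities `i`; its arcs and capacities are as in
`MFNArc` / `mfnCap` below.
-/

open scoped BigOperators Classical

variable {F D : Type}

variable [Fintype F] [Fintype D]

lemma netOutflow_combo {F D : Type} [Fintype F] [Fintype D] {r : ℕ}
    (c : Fin r → ℝ) (f : Fin r → MFNArc F D → ℝ) (v : MFNNode F D) :
    netOutflow (fun a => ∑ k, c k * f k a) v = ∑ k, c k * netOutflow (f k) v := by
  simp only [netOutflow, mul_sub, Finset.mul_sum, Finset.sum_sub_distrib]
  rw [Finset.sum_comm]
  congr 1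
  exact Finset.sum_comm ..

/-- A convex combination of valid partial assignments, each of which
makes the flow network feasible, is itself a valid partial assignment making the flow
network feasible. -/
theorem stmt_1 (U : F → ℕ) (hU : ∀ i, 0 < U i)
    (x : F → D → ℝ) (y : F → ℝ)
    (hx : ∀ i j, 0 ≤ x i j ∧ x i j ≤ 1) (hy : ∀ i, 0 ≤ y i ∧ y i ≤ 1)
    (r : ℕ) (ghat : Fin r → F → D → ℝ) (lam : Fin r → ℝ)
    (hghat : ∀ k, ValidAssign U (ghat k))
    (hlam : ∀ k, 0 ≤ lam k) (hlam1 : ∑ k, lam k = 1)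
    (g : F → D → ℝ) (hg : ∀ i j, g i j = ∑ k, lam k * ghat k i j)
    (hfeas : ∀ k, MFNFeasible U (ghat k) x y) :
    ValidAssign U g ∧ MFNFeasible U g x y := by
  have hvalid : ValidAssign U g := by
    refine ⟨fun i j => ?_, fun j => ?_, fun i => ?_⟩
    · rw [hg]
      exact Finset.sum_nonneg fun k _ => mul_nonneg (hlam k) ((hghat k).1 i j)
    · calc ∑ i, g i j = ∑ k, lam k * ∑ i, ghat k i j := by
            simp only [hg]; rw [Finset.sum_comm]; simp [Finset.mul_sum]
        _ ≤ ∑ k, lam k * 1 :=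
            Finset.sum_le_sum fun k _ => mul_le_mul_of_nonneg_left ((hghat k).2.1 j) (hlam k)
        _ = 1 := by simp [hlam1]
    · calc ∑ j, g i j = ∑ k, lam k * ∑ j, ghat k i j := by
            simp only [hg]; rw [Finset.sum_comm]; simp [Finset.mul_sum]
        _ ≤ ∑ k, lam k * (U i : ℝ) :=
            Finset.sum_le_sum fun k _ => mul_le_mul_of_nonneg_left ((hghat k).2.2 i) (hlam k)
        _ = (U i : ℝ) := by rw [← Finset.sum_mul, hlam1, one_mul]
  refine ⟨hvalid, ?_⟩
  choose fh hfh using hfeas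
  refine ⟨fun j a => ∑ k, lam k * fh k j a, ?_, ?_, ?_, ?_⟩
  · exact fun j a => Finset.sum_nonneg fun k _ => mul_nonneg (hlam k) ((hfh k).1 j a)
  · intro j v hv1 hv2
    rw [netOutflow_combo]
    exact Finset.sum_eq_zero fun k _ => by rw [(hfh k).2.1 j v hv1 hv2, mul_zero]
  · intro j
    rw [netOutflow_combo]
    have : ∀ k, lam k * netOutflow (fh k j) (MFNNode.src j)
        = lam k * (1 - ∑ i, ghat k i j) := fun k => by rw [(hfh k).2.2.1 j]
    rw [Finset.sum_congr rfl fun k _ => this k]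
    simp only [mul_sub, mul_one, Finset.sum_sub_distrib, hlam1, hg]
    rw [Finset.sum_comm]
    simp [Finset.mul_sum]
  · intro a
    calc ∑ j, ∑ k, lam k * fh k j a = ∑ k, lam k * ∑ j, fh k j a := by
          rw [Finset.sum_comm]; simp [Finset.mul_sum]
      _ ≤ ∑ k, lam k * mfnCap U (ghat k) x y a :=
          Finset.sum_le_sum fun k _ =>
            mul_le_mul_of_nonneg_left ((hfh k).2.2.2 a) (hlam k)
      _ = mfnCap U g x y a := by
          cases a with
          | mid i =>
              simp only [mfnCap, hg]
              rw [Finset.sum_comm (s := Finset.univ) (t := Finset.univ)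
                (f := fun j k => lam k * ghat k i j)]
              have : ∀ k, lam k * (y i * ((U i : ℝ) - ∑ j, ghat k i j))
                  = y i * (lam k * (U i : ℝ) - ∑ j, lam k * ghat k i j) := fun k => by
                rw [← Finset.mul_sum]; ring
              rw [Finset.sum_congr rfl fun k _ => this k, ← Finset.mul_sum]
              congr 1
              rw [Finset.sum_sub_distrib, ← Finset.sum_mul, hlam1, one_mul]
          | sx j i => simp [mfnCap, ← Finset.sum_mul, hlam1]
          | gs i j => simp [mfnCap, hg]
          | ft i j =>
              simp only [mfnCap, hg]
              rw [Finset.sum_comm (s := Finset.univ) (t := Finset.univ)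
                (f := fun i' k => lam k * ghat k i' j)]
              have : ∀ k, lam k * (y i * (1 - ∑ i', ghat k i' j))
                  = y i * (lam k * 1 - ∑ i', lam k * ghat k i' j) := fun k => by
                rw [← Finset.mul_sum]; ring
              rw [Finset.sum_congr rfl fun k _ => this k, ← Finset.mul_sum]
              congr 1
              rw [Finset.sum_sub_distrib, ← Finset.sum_mul, hlam1, one_mul]
end

section
/- MFNLP is a relaxation of the capacitated facility location problem: every integral solution (x,y) to the CFL instance is feasible for MFNLP, i.e., MFN(g,x,y) is feasible for every valid partial assignment g. -/
/-!
Formalization of statements from "An LP-rounding approach to capacitated facility location".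

`F` is the (finite) type of facilities, `D` the type of clients, `U i` the (positive integer)
capacity of facility `i`.  The multi-commodity flow network `MFN(g, x, y)` has nodes
`j^s, j^t` for clients `j` and `i, i'` for facilities `i`; its arcs and capacities are as in
`MFNArc` / `mfnCap` below.
-/

open scoped BigOperators Classical

variable {F D : Type}

variable [Fintype F] [Fintype D]

/-- `(x, y)` is an integral solution of the capacitated facility location instance. -/
def IsIntegralSolution (U : F → ℕ) (x : F → D → ℝ) (y : F → ℝ) : Prop :=
  (∀ i j, x i j = 0 ∨ x i j = 1) ∧ (∀ i, y i = 0 ∨ y i = 1) ∧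
  (∀ i j, x i j ≤ y i) ∧ (∀ j, ∑ i, x i j = 1) ∧
  (∀ i, ∑ j, x i j ≤ (U i : ℝ) * y i)

def arcEquiv (F D : Type) : (F ⊕ (D × F) ⊕ (F × D) ⊕ (F × D)) ≃ MFNArc F D where
  toFun := fun s => match s with
    | .inl i => .mid i
    | .inr (.inl (j,i)) => .sx j i
    | .inr (.inr (.inl (i,j))) => .gs i j
    | .inr (.inr (.inr (i,j))) => .ft i j
  invFun := fun a => match a with
    | .mid i => .inl i
    | .sx j i => .inr (.inl (j,i))
    | .gs i j => .inr (.inr (.inl (i,j)))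
    | .ft i j => .inr (.inr (.inr (i,j)))
  left_inv := by rintro (i | ⟨j,i⟩ | ⟨i,j⟩ | ⟨i,j⟩) <;> rfl
  right_inv := by rintro (i | j | i | i) <;> rfl

lemma sum_arcs (φ : MFNArc F D → ℝ) :
    ∑ a, φ a = (∑ i, φ (.mid i)) + (∑ j, ∑ i, φ (.sx j i)) +
      (∑ i, ∑ j, φ (.gs i j)) + (∑ i, ∑ j, φ (.ft i j)) := by
  rw [← Equiv.sum_comp (arcEquiv F D) φ]
  simp [arcEquiv, Fintype.sum_sum_type, Fintype.sum_prod_type, add_assoc]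

lemma netOutflow_src (f : MFNArc F D → ℝ) (j : D) :
    netOutflow f (.src j) = (∑ i, f (.sx j i)) - (∑ i, f (.gs i j)) := by
  unfold netOutflow
  rw [Finset.sum_filter, Finset.sum_filter, sum_arcs, sum_arcs]
  simp [MFNArc.tail, MFNArc.head, Finset.sum_ite_eq, Finset.sum_ite_eq']

lemma netOutflow_fac (f : MFNArc F D → ℝ) (i : F) :
    netOutflow f (.fac i) = (f (.mid i) + ∑ j, f (.gs i j)) - ∑ j, f (.sx j i) := by
  unfold netOutflow
  rw [Finset.sum_filter, Finset.sum_filter, sum_arcs, sum_arcs]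
  simp [MFNArc.tail, MFNArc.head, Finset.sum_ite_eq, Finset.sum_ite_eq']

lemma netOutflow_fac' (f : MFNArc F D → ℝ) (i : F) :
    netOutflow f (.fac' i) = (∑ j, f (.ft i j)) - f (.mid i) := by
  unfold netOutflow
  rw [Finset.sum_filter, Finset.sum_filter, sum_arcs, sum_arcs]
  simp [MFNArc.tail, MFNArc.head, Finset.sum_ite_eq, Finset.sum_ite_eq']

lemma netOutflow_sink (f : MFNArc F D → ℝ) (j : D) :
    netOutflow f (.sink j) = - ∑ i, f (.ft i j) := by
  unfold netOutflow
  rw [Finset.sum_filter, Finset.sum_filter, sum_arcs, sum_arcs]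
  simp [MFNArc.tail, MFNArc.head, Finset.sum_ite_eq, Finset.sum_ite_eq']

section Fix
variable (U : F → ℕ) (x g : F → D → ℝ)

/-- iterates of the Neumann series for the routing fixpoint -/
noncomputable def mseq : ℕ → D → D → ℝ
  | 0 => fun _ _ => 0
  | (k+1) => fun j' j => (1 - ∑ i, g i j) * (if j' = j then 1 else 0) +
      ∑ j'', (∑ i, x i j'' * (g i j' / (U i : ℝ))) * mseq k j'' j

variable {U x g}
variable (hU : ∀ i, 0 < U i) (hxnn : ∀ i j, 0 ≤ x i j) (hgnn : ∀ i j, 0 ≤ g i j)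
  (hgle1 : ∀ j, ∑ i, g i j ≤ 1) (hxcap : ∀ i, ∑ j, x i j ≤ (U i : ℝ))

include hxnn hgnn in
lemma M_nonneg (j' j'' : D) : 0 ≤ ∑ i, x i j'' * (g i j' / (U i : ℝ)) :=
  Finset.sum_nonneg fun i _ => mul_nonneg (hxnn i j'')
    (div_nonneg (hgnn i j') (Nat.cast_nonneg _))

include hU hxnn hgnn hxcap in
lemma M_sum_le (j' : D) :
    ∑ j'', ∑ i, x i j'' * (g i j' / (U i : ℝ)) ≤ ∑ i, g i j' := by
  rw [Finset.sum_comm]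
  refine Finset.sum_le_sum fun i _ => ?_
  rw [← Finset.sum_mul]
  have hUi : (0:ℝ) < (U i : ℝ) := by exact_mod_cast hU i
  calc (∑ j'', x i j'') * (g i j' / (U i : ℝ))
      ≤ (U i : ℝ) * (g i j' / (U i : ℝ)) := by
        apply mul_le_mul_of_nonneg_right (hxcap i)
        exact div_nonneg (hgnn i j') hUi.le
    _ = g i j' := by field_simp

include hxnn hgnn hgle1 in
lemma mseq_nonneg : ∀ k j' j, 0 ≤ mseq U x g k j' j := by
  intro k
  induction k with
  | zero => intro j' j; simp [mseq]
  | succ k ih =>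
    intro j' j
    refine add_nonneg (mul_nonneg (by linarith [hgle1 j]) (by positivity)) ?_
    exact Finset.sum_nonneg fun j'' _ =>
      mul_nonneg (M_nonneg hxnn hgnn j' j'') (ih j'' j)

include hU hxnn hgnn hgle1 hxcap in
lemma mseq_sum_le : ∀ k j', ∑ j, mseq U x g k j' j ≤ 1 := by
  intro k
  induction k with
  | zero => intro j'; simp [mseq]
  | succ k ih =>
    intro j'
    have : ∑ j, mseq U x g (k+1) j' j
        = (1 - ∑ i, g i j') + ∑ j'', (∑ i, x i j'' * (g i j' / (U i : ℝ)))
            * (∑ j, mseq U x g k j'' j) := by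
      show (∑ j, ((1 - ∑ i, g i j) * (if j' = j then 1 else 0) +
        ∑ j'', (∑ i, x i j'' * (g i j' / (U i : ℝ))) * mseq U x g k j'' j)) = _
      rw [Finset.sum_add_distrib, Finset.sum_comm]
      congr 1
      · simp [mul_ite]
      · exact Finset.sum_congr rfl fun j'' _ => (Finset.mul_sum _ _ _).symm
    rw [this]
    have h1 : ∑ j'', (∑ i, x i j'' * (g i j' / (U i : ℝ)))
        * (∑ j, mseq U x g k j'' j) ≤ ∑ i, g i j' := by
      calc ∑ j'', (∑ i, x i j'' * (g i j' / (U i : ℝ))) * (∑ j, mseq U x g k j'' j)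
          ≤ ∑ j'', (∑ i, x i j'' * (g i j' / (U i : ℝ))) * 1 := by
            refine Finset.sum_le_sum fun j'' _ => ?_
            exact mul_le_mul_of_nonneg_left (ih j'') (M_nonneg hxnn hgnn j' j'')
        _ = ∑ j'', ∑ i, x i j'' * (g i j' / (U i : ℝ)) := by simp
        _ ≤ ∑ i, g i j' := M_sum_le hU hxnn hgnn hxcap j'
    linarith

include hxnn hgnn hgle1 in
lemma mseq_mono : ∀ k j' j, mseq U x g k j' j ≤ mseq U x g (k+1) j' j := by
  intro k
  induction k with
  | zero =>
    intro j' j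
    simpa [mseq] using mseq_nonneg (U:=U) hxnn hgnn hgle1 1 j' j
  | succ k ih =>
    intro j' j
    show (1 - ∑ i, g i j) * _ + _ ≤ (1 - ∑ i, g i j) * _ + _
    gcongr with j'' _
    · exact M_nonneg hxnn hgnn j' j''
    · exact ih j'' j

/-- the fixpoint -/
noncomputable def tval (U : F → ℕ) (x g : F → D → ℝ) (j' j : D) : ℝ :=
  ⨆ k, mseq U x g k j' j

include hU hxnn hgnn hgle1 hxcap in
lemma tval_tendsto (j' j : D) :
    Filter.Tendsto (fun k => mseq U x g k j' j) Filter.atTop (nhds (tval U x g j' j)) := by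
  apply tendsto_atTop_ciSup
  · exact monotone_nat_of_le_succ fun k => mseq_mono hxnn hgnn hgle1 k j' j
  · refine ⟨1, fun v ⟨k, hk⟩ => ?_⟩
    rw [← hk]
    calc mseq U x g k j' j ≤ ∑ j, mseq U x g k j' j :=
          Finset.single_le_sum (fun j _ => mseq_nonneg hxnn hgnn hgle1 k j' j)
            (Finset.mem_univ j)
      _ ≤ 1 := mseq_sum_le hU hxnn hgnn hgle1 hxcap k j'

include hU hxnn hgnn hgle1 hxcap in
lemma tval_nonneg (j' j : D) : 0 ≤ tval U x g j' j :=
  ge_of_tendsto' (tval_tendsto hU hxnn hgnn hgle1 hxcap j' j)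
    (fun k => mseq_nonneg hxnn hgnn hgle1 k j' j)

include hU hxnn hgnn hgle1 hxcap in
lemma tval_sum_le (j' : D) : ∑ j, tval U x g j' j ≤ 1 := by
  have ht : Filter.Tendsto (fun k => ∑ j, mseq U x g k j' j) Filter.atTop
      (nhds (∑ j, tval U x g j' j)) :=
    tendsto_finset_sum _ fun j _ => tval_tendsto hU hxnn hgnn hgle1 hxcap j' j
  exact le_of_tendsto' ht fun k => mseq_sum_le hU hxnn hgnn hgle1 hxcap k j'

include hU hxnn hgnn hgle1 hxcap in
lemma tval_fix (j' j : D) :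
    tval U x g j' j = (1 - ∑ i, g i j) * (if j' = j then 1 else 0) +
      ∑ j'', (∑ i, x i j'' * (g i j' / (U i : ℝ))) * tval U x g j'' j := by
  have h1 : Filter.Tendsto (fun k => mseq U x g (k+1) j' j) Filter.atTop
      (nhds (tval U x g j' j)) :=
    (tval_tendsto hU hxnn hgnn hgle1 hxcap j' j).comp (Filter.tendsto_add_atTop_nat 1)
  have h2 : Filter.Tendsto (fun k => (1 - ∑ i, g i j) * (if j' = j then 1 else 0) +
      ∑ j'', (∑ i, x i j'' * (g i j' / (U i : ℝ))) * mseq U x g k j'' j)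
      Filter.atTop (nhds ((1 - ∑ i, g i j) * (if j' = j then 1 else 0) +
      ∑ j'', (∑ i, x i j'' * (g i j' / (U i : ℝ))) * tval U x g j'' j)) := by
    apply Filter.Tendsto.const_add
    exact tendsto_finset_sum _ fun j'' _ =>
      (tval_tendsto hU hxnn hgnn hgle1 hxcap j'' j).const_mul _
  exact tendsto_nhds_unique h1 h2

end Fix

/-- The feasible multi-commodity flow constructed from an integral solution. -/
noncomputable def fflow (U : F → ℕ) (x g : F → D → ℝ) (j : D) : MFNArc F D → ℝ
  | .mid i => (1 - (∑ j', g i j') / (U i : ℝ)) * ∑ j'', x i j'' * tval U x g j'' j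
  | .sx j' i => x i j' * tval U x g j' j
  | .gs i j' => (g i j' / (U i : ℝ)) * ∑ j'', x i j'' * tval U x g j'' j
  | .ft i j' => if j' = j then
      (1 - (∑ j'', g i j'') / (U i : ℝ)) * ∑ j'', x i j'' * tval U x g j'' j else 0

/-- MFNLP is a relaxation of the capacitated facility location problem:
every integral solution `(x, y)` is feasible for MFNLP. -/
theorem stmt_2 (U : F → ℕ) (hU : ∀ i, 0 < U i)
    (x : F → D → ℝ) (y : F → ℝ)
    (hxy : IsIntegralSolution U x y) :
    ∀ g : F → D → ℝ, ValidAssign U g → MFNFeasible U g x y := by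
  obtain ⟨hx01, hy01, hxley, hxsum, hxcapy⟩ := hxy
  intro g hg
  obtain ⟨hgnn, hgle1, hgcap⟩ := hg
  -- basic facts
  have hxnn : ∀ i j, 0 ≤ x i j := fun i j => by rcases hx01 i j with h | h <;> rw [h] <;> norm_num
  have hynn : ∀ i, 0 ≤ y i := fun i => by rcases hy01 i with h | h <;> rw [h] <;> norm_num
  have hyle1 : ∀ i, y i ≤ 1 := fun i => by rcases hy01 i with h | h <;> rw [h] <;> norm_num
  have hUpos : ∀ i, (0:ℝ) < (U i : ℝ) := fun i => by exact_mod_cast hU i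
  have hxcap : ∀ i, ∑ j, x i j ≤ (U i : ℝ) := by
    intro i
    calc ∑ j, x i j ≤ (U i : ℝ) * y i := hxcapy i
      _ ≤ (U i : ℝ) * 1 := by exact mul_le_mul_of_nonneg_left (hyle1 i) (hUpos i).le
      _ = (U i : ℝ) := mul_one _
  have htnn : ∀ j' j, 0 ≤ tval U x g j' j := tval_nonneg hU hxnn hgnn hgle1 hxcap
  have htsum : ∀ j', ∑ j, tval U x g j' j ≤ 1 := tval_sum_le hU hxnn hgnn hgle1 hxcap
  have htfix := tval_fix hU hxnn hgnn hgle1 hxcap (x := x) (g := g)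
  have hGU : ∀ i, (∑ j', g i j') / (U i : ℝ) ≤ 1 := fun i =>
    (div_le_one (hUpos i)).mpr (hgcap i)
  have hGUnn : ∀ i, 0 ≤ (∑ j', g i j') / (U i : ℝ) := fun i =>
    div_nonneg (Finset.sum_nonneg fun j _ => hgnn i j) (hUpos i).le
  -- the inner sums
  set t : D → D → ℝ := tval U x g with ht
  have hSnn : ∀ i j, 0 ≤ ∑ j'', x i j'' * t j'' j := fun i j =>
    Finset.sum_nonneg fun j'' _ => mul_nonneg (hxnn i j'') (htnn j'' j)
  have hScap : ∀ i j, ∑ j'', x i j'' * t j'' j ≤ (U i : ℝ) * y i := by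
    intro i j
    calc ∑ j'', x i j'' * t j'' j ≤ ∑ j'', x i j'' * 1 := by
          refine Finset.sum_le_sum fun j'' _ => mul_le_mul_of_nonneg_left ?_ (hxnn i j'')
          calc t j'' j ≤ ∑ j, t j'' j :=
                Finset.single_le_sum (fun j _ => htnn j'' j) (Finset.mem_univ j)
            _ ≤ 1 := htsum j''
      _ = ∑ j'', x i j'' := by simp
      _ ≤ (U i : ℝ) * y i := hxcapy i
  -- the source-conservation identity in convenient form
  have hsrc : ∀ j' j, (∑ i, x i j' * t j' j) - ∑ i, (g i j' / (U i:ℝ)) *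
      (∑ j'', x i j'' * t j'' j) = (1 - ∑ i, g i j) * (if j' = j then 1 else 0) := by
    intro j' j
    have e1 : ∑ i, x i j' * t j' j = t j' j := by
      rw [← Finset.sum_mul, hxsum, one_mul]
    have e2 : ∑ i, (g i j' / (U i:ℝ)) * (∑ j'', x i j'' * t j'' j)
        = ∑ j'', (∑ i, x i j'' * (g i j' / (U i : ℝ))) * t j'' j := by
      simp_rw [Finset.mul_sum, Finset.sum_mul]
      rw [Finset.sum_comm]
      congr 1; ext j''; congr 1; ext i; ring
    rw [e1, e2, htfix j' j]; ring
  -- total flow identity: all of commodity j's demand reaches the `mid` arcs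
  have hmidtot : ∀ j, ∑ i, (1 - (∑ j', g i j') / (U i : ℝ)) * (∑ j'', x i j'' * t j'' j)
      = 1 - ∑ i, g i j := by
    intro j
    have := Finset.sum_congr rfl (fun j' (_ : j' ∈ Finset.univ) => hsrc j' j)
    rw [Finset.sum_sub_distrib] at this
    have e3 : ∑ j', ∑ i, x i j' * t j' j
        = ∑ i, ∑ j'', x i j'' * t j'' j := by rw [Finset.sum_comm]
    have e4 : ∑ j', ∑ i, (g i j' / (U i:ℝ)) * (∑ j'', x i j'' * t j'' j)
        = ∑ i, ((∑ j', g i j') / (U i : ℝ)) * (∑ j'', x i j'' * t j'' j) := by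
      rw [Finset.sum_comm]
      congr 1; ext i
      rw [← Finset.sum_mul]
      congr 1
      rw [← Finset.sum_div]
    have e5 : ∑ j', (1 - ∑ i, g i j) * (if j' = j then 1 else 0) = 1 - ∑ i, g i j := by
      simp [mul_ite]
    rw [e3, e4, e5] at this
    rw [← this, ← Finset.sum_sub_distrib]
    congr 1; ext i; ring
  refine ⟨fflow U x g, ?_, ?_, ?_, ?_⟩
  · -- nonnegativity
    intro j a
    cases a with
    | mid i => exact mul_nonneg (by linarith [hGU i]) (hSnn i j)
    | sx j' i => exact mul_nonneg (hxnn i j') (htnn j' j)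
    | gs i j' => exact mul_nonneg (div_nonneg (hgnn i j') (hUpos i).le) (hSnn i j)
    | ft i j' =>
      simp only [fflow]
      split
      · exact mul_nonneg (by linarith [hGU i]) (hSnn i j)
      · exact le_refl _
  · -- conservation
    intro j v hv1 hv2
    cases v with
    | src j' =>
      have hne : j' ≠ j := fun h => hv1 (by rw [h])
      rw [netOutflow_src]
      simp only [fflow]
      rw [hsrc j' j, if_neg hne, mul_zero]
    | fac i =>
      rw [netOutflow_fac]
      simp only [fflow]
      have e : ∑ j', (g i j' / (U i:ℝ)) * (∑ j'', x i j'' * t j'' j)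
          = ((∑ j', g i j') / (U i : ℝ)) * (∑ j'', x i j'' * t j'' j) := by
        rw [← Finset.sum_mul, ← Finset.sum_div]
      have e2 : ∑ j', x i j' * t j' j = ∑ j'', x i j'' * t j'' j := rfl
      rw [e, e2]; ring
    | fac' i =>
      rw [netOutflow_fac']
      simp only [fflow]
      rw [Finset.sum_ite_eq' Finset.univ j]
      simp
    | sink j' =>
      have hne : j' ≠ j := fun h => hv2 (by rw [h])
      rw [netOutflow_sink]
      simp only [fflow]
      simp [hne]
  · -- demand at the source
    intro j
    rw [netOutflow_src]
    simp only [fflow]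
    rw [hsrc j j, if_pos rfl, mul_one]
  · -- capacities
    intro a
    cases a with
    | mid i =>
      simp only [fflow, mfnCap]
      calc ∑ j, (1 - (∑ j', g i j') / (U i : ℝ)) * (∑ j'', x i j'' * t j'' j)
          = (1 - (∑ j', g i j') / (U i : ℝ)) * ∑ j, ∑ j'', x i j'' * t j'' j := by
            rw [Finset.mul_sum]
        _ ≤ (1 - (∑ j', g i j') / (U i : ℝ)) * ((U i : ℝ) * y i) := by
            refine mul_le_mul_of_nonneg_left ?_ (by linarith [hGU i])
            calc ∑ j, ∑ j'', x i j'' * t j'' j = ∑ j'', x i j'' * (∑ j, t j'' j) := by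
                  rw [Finset.sum_comm]; simp_rw [Finset.mul_sum]
              _ ≤ ∑ j'', x i j'' * 1 := Finset.sum_le_sum fun j'' _ =>
                  mul_le_mul_of_nonneg_left (htsum j'') (hxnn i j'')
              _ = ∑ j'', x i j'' := by simp
              _ ≤ (U i : ℝ) * y i := hxcapy i
        _ = y i * ((U i : ℝ) - ∑ j, g i j) := by
            have hne := (hUpos i).ne'
            field_simp
    | sx j' i =>
      simp only [fflow, mfnCap]
      calc ∑ j, x i j' * t j' j = x i j' * ∑ j, t j' j := by rw [Finset.mul_sum]
        _ ≤ x i j' * 1 := mul_le_mul_of_nonneg_left (htsum j') (hxnn i j')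
        _ = x i j' := mul_one _
    | gs i j' =>
      simp only [fflow, mfnCap]
      calc ∑ j, (g i j' / (U i:ℝ)) * (∑ j'', x i j'' * t j'' j)
          = (g i j' / (U i:ℝ)) * ∑ j, ∑ j'', x i j'' * t j'' j := by rw [Finset.mul_sum]
        _ ≤ (g i j' / (U i:ℝ)) * ((U i : ℝ) * 1) := by
            refine mul_le_mul_of_nonneg_left ?_ (div_nonneg (hgnn i j') (hUpos i).le)
            calc ∑ j, ∑ j'', x i j'' * t j'' j = ∑ j'', x i j'' * (∑ j, t j'' j) := by
                  rw [Finset.sum_comm]; simp_rw [Finset.mul_sum]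
              _ ≤ ∑ j'', x i j'' * 1 := Finset.sum_le_sum fun j'' _ =>
                  mul_le_mul_of_nonneg_left (htsum j'') (hxnn i j'')
              _ = ∑ j'', x i j'' := by simp
              _ ≤ (U i : ℝ) := hxcap i
              _ = (U i : ℝ) * 1 := (mul_one _).symm
        _ = g i j' := by
            have hne := (hUpos i).ne'
            field_simp
    | ft i j' =>
      simp only [fflow, mfnCap]
      rw [Finset.sum_ite_eq Finset.univ j']
      simp only [Finset.mem_univ, if_true]
      rcases hy01 i with hy | hy
      · have hx0 : ∀ j'', x i j'' = 0 := fun j'' =>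
          le_antisymm (by rw [← hy] at *; linarith [hxley i j'']) (hxnn i j'')
        simp [hx0, hy]
      · rw [hy, one_mul]
        calc (1 - (∑ j'', g i j'') / (U i : ℝ)) * (∑ j'', x i j'' * t j'' j')
            ≤ ∑ i', (1 - (∑ j'', g i' j'') / (U i' : ℝ)) * (∑ j'', x i' j'' * t j'' j') := by
              exact Finset.single_le_sum
                (f := fun i' => (1 - (∑ j'', g i' j'') / (U i' : ℝ)) *
                  (∑ j'', x i' j'' * t j'' j'))
                (fun i' _ => mul_nonneg (by linarith [hGU i']) (hSnn i' j'))
                (Finset.mem_univ i)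
          _ = 1 - ∑ i', g i' j' := hmidtot j'
end

section
/- Consider the CFL instance with two facilities F = {i_1, i_2} of capacities U_{i_1} = U_{i_2} = n, opening costs o_{i_1} = 0 and o_{i_2} = 1, a set D of n+1 clients, and all pairwise distances equal to 0. Then every pair (x,y) feasible for MFNLP satisfies y_{i_2} ≥ 1, and hence c(x,y) ≥ 1. -/
/-!
Formalization of statements from "An LP-rounding approach to capacitated facility location".

`F` is the (finite) type of facilities, `D` the type of clients, `U i` the (positive integer)
capacity of facility `i`.  The multi-commodity flow network `MFN(g, x, y)` has nodes
`j^s, j^t` for clients `j` and `i, i'` for facilities `i`; its arcs and capacities are as in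
`MFNArc` / `mfnCap` below.
-/

open scoped BigOperators Classical

variable {F D : Type}

variable [Fintype F] [Fintype D]

namespace StmtSixAux

variable {F D : Type} [Fintype F] [Fintype D]

/-- Equivalence between arcs and a sum type, to decompose sums over arcs. -/
def arcEquiv : MFNArc F D ≃ (F ⊕ (D × F) ⊕ (F × D) ⊕ (F × D)) where
  toFun a := match a with
    | .mid i => .inl i
    | .sx j i => .inr (.inl (j, i))
    | .gs i j => .inr (.inr (.inl (i, j)))
    | .ft i j => .inr (.inr (.inr (i, j)))
  invFun s := match s with
    | .inl i => .mid i
    | .inr (.inl (j, i)) => .sx j i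
    | .inr (.inr (.inl (i, j))) => .gs i j
    | .inr (.inr (.inr (i, j))) => .ft i j
  left_inv a := by cases a <;> rfl
  right_inv s := by rcases s with i | ⟨j, i⟩ | ⟨i, j⟩ | ⟨i, j⟩ <;> rfl

lemma sum_arc (φ : MFNArc F D → ℝ) :
    ∑ a, φ a = ∑ i, φ (.mid i) + ∑ j, ∑ i, φ (.sx j i)
      + ∑ i, ∑ j, φ (.gs i j) + ∑ i, ∑ j, φ (.ft i j) := by
  rw [← Equiv.sum_comp (arcEquiv (F := F) (D := D)).symm φ]
  simp [Fintype.sum_sum_type, Fintype.sum_prod_type, arcEquiv]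
  ring

/-- Equivalence between nodes and a sum type. -/
def nodeEquiv : MFNNode F D ≃ (D ⊕ F ⊕ F ⊕ D) where
  toFun v := match v with
    | .src j => .inl j
    | .fac i => .inr (.inl i)
    | .fac' i => .inr (.inr (.inl i))
    | .sink j => .inr (.inr (.inr j))
  invFun s := match s with
    | .inl j => .src j
    | .inr (.inl i) => .fac i
    | .inr (.inr (.inl i)) => .fac' i
    | .inr (.inr (.inr j)) => .sink j
  left_inv v := by cases v <;> rfl
  right_inv s := by rcases s with j | i | i | j <;> rfl

noncomputable instance : Fintype (MFNNode F D) :=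
  Fintype.ofEquiv _ (nodeEquiv (F := F) (D := D)).symm

lemma total_nf (f : MFNArc F D → ℝ) : ∑ v, netOutflow f v = 0 := by
  unfold netOutflow
  rw [Finset.sum_sub_distrib, Finset.sum_fiberwise, Finset.sum_fiberwise, sub_self]

lemma nf_sink (f : MFNArc F D → ℝ) (j : D) :
    netOutflow f (.sink j) = -∑ i, f (.ft i j) := by
  unfold netOutflow
  rw [Finset.sum_filter, Finset.sum_filter, sum_arc, sum_arc]
  simp [MFNArc.tail, MFNArc.head]

lemma nf_fac' (f : MFNArc F D → ℝ) (i : F) :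
    netOutflow f (.fac' i) = (∑ j, f (.ft i j)) - f (.mid i) := by
  unfold netOutflow
  rw [Finset.sum_filter, Finset.sum_filter, sum_arc, sum_arc]
  simp [MFNArc.tail, MFNArc.head]

end StmtSixAux

/-- On the instance with two facilities of capacity `n`, opening costs
`0` and `1`, `n + 1` clients, and all distances `0`, every MFNLP-feasible pair `(x, y)`
has `y i₂ ≥ 1` and hence cost at least `1`. -/
theorem stmt_6 (n : ℕ) (hn : 0 < n)
    (x : Fin 2 → Fin (n + 1) → ℝ) (y : Fin 2 → ℝ)
    (hx : ∀ i j, 0 ≤ x i j ∧ x i j ≤ 1) (hy : ∀ i, 0 ≤ y i ∧ y i ≤ 1)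
    (hfeas : ∀ g : Fin 2 → Fin (n + 1) → ℝ,
      ValidAssign (fun _ => n) g → MFNFeasible (fun _ => n) g x y) :
    1 ≤ y 1 ∧
      1 ≤ ∑ i, (![(0 : ℝ), 1]) i * y i + ∑ i, ∑ j, (0 : ℝ) * x i j := by
  classical
  open StmtSixAux in
  have key : 1 ≤ y 1 := by
    -- the partial assignment sending every client except `0` fully to facility `0`
    set g : Fin 2 → Fin (n + 1) → ℝ :=
      fun i j => if i = 0 ∧ j ≠ 0 then 1 else 0 with hg
    have hg0 : ∀ i : Fin 2, g i 0 = 0 := by intro i; simp [hg]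
    have hgsum0 : (∑ i, g i (0 : Fin (n + 1))) = 0 := by simp [hg0]
    have hgrow0 : (∑ j, g 0 j) = (n : ℝ) := by
      have h1 : (∑ j : Fin (n + 1), g 0 j)
          = ∑ j : Fin (n + 1), ((1 : ℝ) - if j = 0 then 1 else 0) := by
        apply Finset.sum_congr rfl
        intro j _
        by_cases h : j = 0 <;> simp [hg, h]
      rw [h1, Finset.sum_sub_distrib]
      simp
    have hgrow1 : (∑ j, g 1 j) = 0 := by
      apply Finset.sum_eq_zero
      intro j _
      simp [hg]
    have hvalid : ValidAssign (fun _ => n) g := by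
      refine ⟨fun i j => by positivity, fun j => ?_, fun i => ?_⟩
      · rw [Fin.sum_univ_two]
        by_cases h : j = 0 <;> simp [hg, h]
      · fin_cases i
        · show (∑ j : Fin (n + 1), g 0 j) ≤ (n : ℝ)
          rw [hgrow0]
        · show (∑ j : Fin (n + 1), g 1 j) ≤ (n : ℝ)
          rw [hgrow1]; positivity
    obtain ⟨f, hpos, hcons, hsrc, hcap⟩ := hfeas g hvalid
    -- the flow of commodity 0 entering `sink 0` is 1
    have hsinkflow : (∑ i, f 0 (.ft i 0)) = 1 := by
      have htot := total_nf (f 0)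
      have hsplit : (∑ v, netOutflow (f 0) v)
          = ∑ v ∈ ({MFNNode.src 0, MFNNode.sink 0} : Finset (MFNNode (Fin 2) (Fin (n+1)))),
              netOutflow (f 0) v
            + ∑ v ∈ ({MFNNode.src 0, MFNNode.sink 0} : Finset (MFNNode (Fin 2) (Fin (n+1))))ᶜ,
              netOutflow (f 0) v :=
        (Finset.sum_add_sum_compl _ _).symm
      have hrest : ∑ v ∈ ({MFNNode.src 0, MFNNode.sink 0} :
          Finset (MFNNode (Fin 2) (Fin (n+1))))ᶜ, netOutflow (f 0) v = 0 := by
        apply Finset.sum_eq_zero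
        intro v hv
        simp only [Finset.mem_compl, Finset.mem_insert, Finset.mem_singleton, not_or] at hv
        exact hcons 0 v hv.1 hv.2
      have hpair : ∑ v ∈ ({MFNNode.src 0, MFNNode.sink 0} :
          Finset (MFNNode (Fin 2) (Fin (n+1)))), netOutflow (f 0) v
          = netOutflow (f 0) (.src 0) + netOutflow (f 0) (.sink 0) :=
        Finset.sum_pair (by simp)
      have hsrc0 := hsrc 0
      rw [hgsum0] at hsrc0
      have hnfsink : netOutflow (f 0) (.sink 0) = -∑ i, f 0 (.ft i 0) := nf_sink _ _
      rw [hsplit, hrest, hpair, hsrc0, hnfsink] at htot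
      linarith
    -- no flow crosses the middle arc of facility 0
    have hmid0 : f 0 (.mid 0) = 0 := by
      have hc := hcap (.mid 0)
      have hcap0 : mfnCap (fun _ => n) g x y (.mid 0) = 0 := by
        show y 0 * ((n : ℝ) - ∑ j, g 0 j) = 0
        rw [hgrow0]; ring
      rw [hcap0] at hc
      have h1 : f 0 (.mid 0) ≤ ∑ j, f j (.mid 0) :=
        Finset.single_le_sum (f := fun j => f j (MFNArc.mid 0)) (fun j _ => hpos j _) (Finset.mem_univ 0)
      have h2 := hpos 0 (MFNArc.mid 0)
      linarith
    -- hence commodity 0 sends nothing along `ft 0 0`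
    have hft00 : f 0 (.ft 0 0) = 0 := by
      have hc := hcons 0 (.fac' 0) (by simp) (by simp)
      rw [nf_fac' (f 0) 0, hmid0, sub_zero] at hc
      have h1 : f 0 (.ft 0 0) ≤ ∑ j, f 0 (.ft 0 j) :=
        Finset.single_le_sum (fun j _ => hpos 0 _) (Finset.mem_univ 0)
      have h2 := hpos 0 (MFNArc.ft 0 0)
      linarith
    -- so all of commodity 0's unit goes along `ft 1 0`
    have hft10 : f 0 (.ft 1 0) = 1 := by
      rw [Fin.sum_univ_two, hft00, zero_add] at hsinkflow
      exact hsinkflow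
    -- capacity of `ft 1 0` is `y 1`
    have hc := hcap (.ft 1 0)
    have hcap1 : mfnCap (fun _ => n) g x y (.ft 1 0) = y 1 := by
      show y 1 * (1 - ∑ i, g i 0) = y 1
      rw [hgsum0]; ring
    rw [hcap1] at hc
    have h1 : f 0 (.ft 1 0) ≤ ∑ j, f j (.ft 1 0) :=
      Finset.single_le_sum (f := fun j => f j (MFNArc.ft 1 0)) (fun j _ => hpos j _) (Finset.mem_univ 0)
    linarith
  refine ⟨key, ?_⟩
  simpa [Fin.sum_univ_two] using key
end

section
/- In the maximum-matching construction the following hold: (a) every facility i ∈ I_H is saturated, i.e., Σ_{j∈D} z_{ij} = U_i; (b) if i ∈ I \ I_H and j ∈ D_H, then z_{ij} = 2x*_{ij}; (c) if i ∈ I_H and j ∈ D \ D_H, then z_{ij} = 0. -/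
/-!
Formalization of statements from "An LP-rounding approach to capacitated facility location".

`F` is the (finite) type of facilities, `D` the type of clients, `U i` the (positive integer)
capacity of facility `i`.  The multi-commodity flow network `MFN(g, x, y)` has nodes
`j^s, j^t` for clients `j` and `i, i'` for facilities `i`; its arcs and capacities are as in
`MFNArc` / `mfnCap` below.
-/

open scoped BigOperators Classical

variable {F D : Type}

variable [Fintype F] [Fintype D]

/-- Arcs of the residual graph `H` of the fractional `b`-matching `z`: an arc from client
`j` to facility `i ∈ I` when `z i j < 2 * x i j`, and an arc from facility `i ∈ I` to
client `j` when `z i j > 0`. -/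
def HStep (I : Finset F) (z x : F → D → ℝ) : F ⊕ D → F ⊕ D → Prop
  | Sum.inr j, Sum.inl i => i ∈ I ∧ z i j < 2 * x i j
  | Sum.inl i, Sum.inr j => i ∈ I ∧ 0 < z i j
  | _, _ => False

/-- Client `j` is unsaturated by the fractional matching `z`. -/
def Unsat (I : Finset F) (z : F → D → ℝ) (j : D) : Prop :=
  ∑ i ∈ I, z i j ≠ 1

/-- Facility `i` belongs to `I_H`: it is reachable in `H` from some unsaturated client. -/
def InIH (I : Finset F) (z x : F → D → ℝ) (i : F) : Prop :=
  ∃ k : D, Unsat I z k ∧ Relation.ReflTransGen (HStep I z x) (Sum.inr k) (Sum.inl i)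

/-- Client `j` belongs to `D_H`: it is reachable in `H` from some unsaturated client
(every unsaturated client itself belongs to `D_H`). -/
def InDH (I : Finset F) (z x : F → D → ℝ) (j : D) : Prop :=
  ∃ k : D, Unsat I z k ∧ Relation.ReflTransGen (HStep I z x) (Sum.inr k) (Sum.inr j)


/-!
If a facility `i ∈ I_H` had slack, a path in `H` from an unsaturated client `k` to `i` would carry
a unit flow `d` that only uses directions in which `z` can move: `z + t d` stays feasible for small
`t > 0` and has value larger by `t`, contradicting maximality. Parts (b) and (c) say that the
reachable set is closed under the arcs of `H`.
-/

open Filter Topology Relation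

lemma eventually_add_mul_le {p q M : ℝ} (hp : p ≤ M) (hq : 0 < q → p < M) :
    ∀ᶠ t in 𝓝[>] (0 : ℝ), p + t * q ≤ M := by
  rcases le_or_gt q 0 with hq0 | hq0
  · filter_upwards [self_mem_nhdsWithin] with t (ht : 0 < t)
    nlinarith
  · have hcont : Continuous fun t : ℝ => p + t * q := by fun_prop
    have hlim : Tendsto (fun t : ℝ => p + t * q) (𝓝[>] 0) (𝓝 p) := by
      simpa using (hcont.tendsto 0).mono_left nhdsWithin_le_nhds
    exact (hlim.eventually_lt_const (hq hq0)).mono fun _ h => h.le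

lemma eventually_nonneg_add_mul {p q : ℝ} (hp : 0 ≤ p) (hq : q < 0 → 0 < p) :
    ∀ᶠ t in 𝓝[>] (0 : ℝ), 0 ≤ p + t * q :=
  (eventually_add_mul_le (p := -p) (q := -q) (M := 0) (by linarith)
    fun h => by linarith [hq (by linarith)]).mono fun t ht => by linarith

section Reachability

omit [Fintype F] [Fintype D]

variable {x z : F → D → ℝ} {I : Finset F}

/-- Positive entries of `d` carry flow along arcs client → facility of `H`, negative ones along
arcs facility → client. -/
def IsResidualFlow (I : Finset F) (z x d : F → D → ℝ) : Prop :=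
  ∀ i j, (0 < d i j → HStep I z x (.inr j) (.inl i)) ∧ (d i j < 0 → HStep I z x (.inl i) (.inr j))

lemma IsResidualFlow.add_single {d : F → D → ℝ} (hd : IsResidualFlow I z x d) {i : F} {j : D}
    {c : ℝ} (hc_pos : 0 < c → HStep I z x (.inr j) (.inl i))
    (hc_neg : c < 0 → HStep I z x (.inl i) (.inr j)) :
    IsResidualFlow I z x (d + Pi.single i (Pi.single j c)) := by
  intro a b
  by_cases h : a = i ∧ b = j
  · obtain ⟨rfl, rfl⟩ := h
    simp only [Pi.add_apply, Pi.single_eq_same]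
    constructor <;> intro hlt
    · rcases lt_or_ge 0 c with hc | hc
      · exact hc_pos hc
      · exact (hd a b).1 (by linarith)
    · rcases lt_or_ge c 0 with hc | hc
      · exact hc_neg hc
      · exact (hd a b).2 (by linarith)
  · have : (Pi.single i (Pi.single j c) : F → D → ℝ) a b = 0 := by
      by_cases ha : a = i
      · subst ha; simp [show b ≠ j from fun hb => h ⟨rfl, hb⟩]
      · simp [ha]
    simpa [this] using hd a b

lemma mem_of_inIH {i : F} (hi : InIH I z x i) : i ∈ I := by
  obtain ⟨k, -, hpath⟩ := hi
  rcases hpath.cases_tail with h | ⟨v, -, hstep⟩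
  · cases h
  · rcases v with _ | _
    · exact hstep.elim
    · exact hstep.1

lemma InDH.inIH_of_lt {i : F} {j : D} (hj : InDH I z x j) (hi : i ∈ I)
    (hlt : z i j < 2 * x i j) : InIH I z x i :=
  let ⟨k, hk, hpath⟩ := hj
  ⟨k, hk, hpath.tail ⟨hi, hlt⟩⟩

lemma InIH.inDH_of_pos {i : F} {j : D} (hi : InIH I z x i) (hpos : 0 < z i j) :
    InDH I z x j :=
  let ⟨k, hk, hpath⟩ := hi
  ⟨k, hk, hpath.tail ⟨mem_of_inIH hi, hpos⟩⟩

end Reachability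

section ResidualFlow

omit [Fintype F]

variable {x z : F → D → ℝ} {I : Finset F}

/-- Net inflow of the flow `d` at a vertex of `H`. -/
noncomputable def excess (I : Finset F) (d : F → D → ℝ) : F ⊕ D → ℝ
  | .inl i => ∑ j, d i j
  | .inr j => -∑ i ∈ I, d i j

lemma excess_zero : excess I (0 : F → D → ℝ) = 0 := by
  funext v; cases v <;> simp [excess]

lemma excess_add_single {d : F → D → ℝ} {i : F} (hi : i ∈ I) (j : D) (c : ℝ) :
    excess I (d + Pi.single i (Pi.single j c)) =
      excess I d + (Pi.single (.inl i) c - Pi.single (.inr j) c) := by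
  funext v
  rcases v with a | b
  · by_cases h : a = i <;> simp [excess, Finset.sum_add_distrib, h]
  · by_cases h : b = j <;>
      simp [excess, Finset.sum_add_distrib, Pi.single_apply, ite_apply, h, hi, add_comm]

lemma exists_residualFlow_of_reflTransGen {k : D} {v : F ⊕ D}
    (h : ReflTransGen (HStep I z x) (.inr k) v) :
    ∃ d, IsResidualFlow I z x d ∧ excess I d = Pi.single v 1 - Pi.single (.inr k) 1 := by
  induction h with
  | refl => exact ⟨0, fun _ _ => by simp, by rw [excess_zero, sub_self]⟩
  | @tail v w _ hvw ih =>
    obtain ⟨d, hd, hex⟩ := ih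
    rcases v with i | j <;> rcases w with i' | j'
    · exact hvw.elim
    · obtain ⟨hi, hpos⟩ := hvw
      refine ⟨d + Pi.single i (Pi.single j' (-1)), hd.add_single (by intro; linarith)
        fun _ => ⟨hi, hpos⟩, ?_⟩
      rw [excess_add_single hi, hex, Pi.single_neg, Pi.single_neg]
      abel
    · obtain ⟨hi, hlt⟩ := hvw
      refine ⟨d + Pi.single i' (Pi.single j 1), hd.add_single (fun _ => ⟨hi, hlt⟩)
        (by intro; linarith), ?_⟩
      rw [excess_add_single hi, hex]
      abel
    · exact hvw.elim

end ResidualFlow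

section Augmentation

variable {U : F → ℕ} {x z : F → D → ℝ} {I : Finset F}

structure IsBMatching (U : F → ℕ) (x : F → D → ℝ) (I : Finset F) (z : F → D → ℝ) : Prop where
  nonneg : ∀ i j, 0 ≤ z i j
  le_two_mul : ∀ i ∈ I, ∀ j, z i j ≤ 2 * x i j
  sum_client_le_one : ∀ j, ∑ i ∈ I, z i j ≤ 1
  sum_facility_le_cap : ∀ i ∈ I, ∑ j, z i j ≤ (U i : ℝ)

lemma IsBMatching.exists_sum_lt {d : F → D → ℝ} (hz : IsBMatching U x I z)
    (hpos : ∀ i j, 0 < d i j → i ∈ I ∧ z i j < 2 * x i j)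
    (hneg : ∀ i j, d i j < 0 → 0 < z i j)
    (hrow : ∀ i ∈ I, 0 < ∑ j, d i j → ∑ j, z i j < U i)
    (hcol : ∀ j, 0 < ∑ i ∈ I, d i j → ∑ i ∈ I, z i j < 1)
    (hval : 0 < ∑ i ∈ I, ∑ j, d i j) :
    ∃ z', IsBMatching U x I z' ∧ ∑ i ∈ I, ∑ j, z i j < ∑ i ∈ I, ∑ j, z' i j := by
  have sum_move {ι : Type} (s : Finset ι) (f g : ι → ℝ) (t : ℝ) :
      ∑ a ∈ s, (f a + t * g a) = ∑ a ∈ s, f a + t * ∑ a ∈ s, g a := by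
    rw [Finset.sum_add_distrib, Finset.mul_sum]
  have hfeas : ∀ᶠ t in 𝓝[>] (0 : ℝ), IsBMatching U x I (fun i j => z i j + t * d i j) := by
    have h0 := eventually_all.2 fun i => eventually_all.2 fun j =>
      eventually_nonneg_add_mul (hz.nonneg i j) (hneg i j)
    have h2x := (eventually_all_finset I).2 fun i hi => eventually_all.2 fun j =>
      eventually_add_mul_le (hz.le_two_mul i hi j) fun h => (hpos i j h).2
    have h1 := eventually_all.2 fun j =>
      eventually_add_mul_le (hz.sum_client_le_one j) (hcol j)
    have hU := (eventually_all_finset I).2 fun i hi =>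
      eventually_add_mul_le (hz.sum_facility_le_cap i hi) (hrow i hi)
    filter_upwards [h0, h2x, h1, hU] with t h0 h2x h1 hU
    exact ⟨h0, h2x, fun j => (sum_move _ _ _ t).trans_le (h1 j),
      fun i hi => (sum_move _ _ _ t).trans_le (hU i hi)⟩
  obtain ⟨t, ht, htpos⟩ := (hfeas.and self_mem_nhdsWithin).exists
  refine ⟨_, ht, ?_⟩
  simp only [sum_move]
  nlinarith [show (0 : ℝ) < t from htpos]

lemma IsBMatching.sum_eq_cap_of_inIH (hz : IsBMatching U x I z)
    (hmax : ∀ z', IsBMatching U x I z' → ∑ i ∈ I, ∑ j, z' i j ≤ ∑ i ∈ I, ∑ j, z i j)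
    {i : F} (hi : InIH I z x i) : ∑ j, z i j = U i := by
  have hiI := mem_of_inIH hi
  obtain ⟨k, hk, hpath⟩ := hi
  by_contra hne
  have hslack := lt_of_le_of_ne (hz.sum_facility_le_cap i hiI) hne
  obtain ⟨d, hd, hex⟩ := exists_residualFlow_of_reflTransGen hpath
  have hrow (a : F) : ∑ b, d a b = if a = i then 1 else 0 := by
    simpa [excess, Pi.single_apply, eq_comm] using congrFun hex (.inl a)
  have hcol (b : D) : ∑ a ∈ I, d a b = if b = k then 1 else 0 := by
    simpa [excess, Pi.single_apply] using congrFun hex (.inr b)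
  obtain ⟨z', hz', hlt⟩ := hz.exists_sum_lt (d := d) (fun a b h => (hd a b).1 h)
    (fun a b h => ((hd a b).2 h).2)
    (fun a _ h => by
      rw [hrow] at h
      split_ifs at h with ha
      · exact ha ▸ hslack
      · exact absurd h (lt_irrefl 0))
    (fun b h => by
      rw [hcol] at h
      split_ifs at h with hb
      · exact hb ▸ lt_of_le_of_ne (hz.sum_client_le_one k) hk
      · exact absurd h (lt_irrefl 0))
    (by simp [hrow, hiI])
  exact (hmax z' hz').not_gt hlt

end Augmentation

theorem stmt_8_general
    (U : F → ℕ)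
    (xstar : F → D → ℝ)
    (I : Finset F)
    (z : F → D → ℝ)
    (hz0 : ∀ i j, 0 ≤ z i j)
    (hzx : ∀ i ∈ I, ∀ j, z i j ≤ 2 * xstar i j)
    (hz1 : ∀ j, ∑ i ∈ I, z i j ≤ 1)
    (hzU : ∀ i ∈ I, ∑ j, z i j ≤ (U i : ℝ))
    (hzmax : ∀ z' : F → D → ℝ, (∀ i j, 0 ≤ z' i j) →
      (∀ i ∈ I, ∀ j, z' i j ≤ 2 * xstar i j) →
      (∀ j, ∑ i ∈ I, z' i j ≤ 1) → (∀ i ∈ I, ∑ j, z' i j ≤ (U i : ℝ)) →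
      ∑ i ∈ I, ∑ j, z' i j ≤ ∑ i ∈ I, ∑ j, z i j)
 :
    (∀ i, InIH I z xstar i → ∑ j, z i j = (U i : ℝ)) ∧
    (∀ i ∈ I, ¬ InIH I z xstar i →
      ∀ j, InDH I z xstar j → z i j = 2 * xstar i j) ∧
    (∀ i, InIH I z xstar i → ∀ j, ¬ InDH I z xstar j → z i j = 0) := by
  have hz : IsBMatching U xstar I z := ⟨hz0, hzx, hz1, hzU⟩
  refine ⟨fun i hi => hz.sum_eq_cap_of_inIH
      (fun z' hz' => hzmax z' hz'.1 hz'.2 hz'.3 hz'.4) hi, ?_, ?_⟩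
  · intro i hiI hnot j hj
    by_contra hne
    exact hnot (hj.inIH_of_lt hiI (lt_of_le_of_ne (hzx i hiI j) hne))
  · intro i hi j hnot
    by_contra hne
    exact hnot (hi.inDH_of_pos (lt_of_le_of_ne (hz0 i j) (Ne.symm hne)))

/-- Properties of the maximum fractional `b`-matching `z` and its
residual graph `H`: (a) every facility in `I_H` is saturated; (b) arcs between
`I \ I_H` and `D_H` are saturated at `2 x*`; (c) arcs between `I_H` and `D \ D_H`
carry no matching value. -/
theorem stmt_8
    (U : F → ℕ) (hU : ∀ i, 0 < U i)
    (xstar : F → D → ℝ) (ystar : F → ℝ)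
    (hxs : ∀ i j, 0 ≤ xstar i j ∧ xstar i j ≤ 1)
    (hys : ∀ i, 0 ≤ ystar i ∧ ystar i ≤ 1)
    (y' : F → ℝ) (hy' : ∀ i, y' i = if (1 / 4 : ℝ) ≤ ystar i then 1 else ystar i)
    (I : Finset F) (hI : ∀ i, i ∈ I ↔ y' i = 1)
    (z : F → D → ℝ)
    (hz0 : ∀ i j, 0 ≤ z i j)
    (hzx : ∀ i ∈ I, ∀ j, z i j ≤ 2 * xstar i j)
    (hzoff : ∀ i ∉ I, ∀ j, z i j = 0)
    (hz1 : ∀ j, ∑ i ∈ I, z i j ≤ 1)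
    (hzU : ∀ i ∈ I, ∑ j, z i j ≤ (U i : ℝ))
    (hzmax : ∀ z' : F → D → ℝ, (∀ i j, 0 ≤ z' i j) →
      (∀ i ∈ I, ∀ j, z' i j ≤ 2 * xstar i j) →
      (∀ j, ∑ i ∈ I, z' i j ≤ 1) → (∀ i ∈ I, ∑ j, z' i j ≤ (U i : ℝ)) →
      ∑ i ∈ I, ∑ j, z' i j ≤ ∑ i ∈ I, ∑ j, z i j)
 :
    (∀ i, InIH I z xstar i → ∑ j, z i j = (U i : ℝ)) ∧
    (∀ i ∈ I, ¬ InIH I z xstar i →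
      ∀ j, InDH I z xstar j → z i j = 2 * xstar i j) ∧
    (∀ i, InIH I z xstar i → ∀ j, ¬ InDH I z xstar j → z i j = 0) :=
  stmt_8_general U xstar I z hz0 hzx hz1 hzU hzmax
end

section
/- In the maximum-matching construction with partial assignment g*, for every client j ∈ D_H it holds that d_j = 1 − Σ_{i∈I_H} z_{ij} ≥ Σ_{i∈I\I_H} 2x*_{ij}, where d_j = 1 − Σ_{i∈F} g*_{ij}. -/
/-!
Formalization of statements from "An LP-rounding approach to capacitated facility location".

`F` is the (finite) type of facilities, `D` the type of clients, `U i` the (positive integer)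
capacity of facility `i`.  The multi-commodity flow network `MFN(g, x, y)` has nodes
`j^s, j^t` for clients `j` and `i, i'` for facilities `i`; its arcs and capacities are as in
`MFNArc` / `mfnCap` below.
-/

open scoped BigOperators Classical

variable {F D : Type}

variable [Fintype F] [Fintype D]

/-- For every client `j ∈ D_H`,
`d j = 1 - ∑_{i ∈ I_H} z i j ≥ ∑_{i ∈ I \ I_H} 2 x* i j`. -/
theorem stmt_9
    (U : F → ℕ) (hU : ∀ i, 0 < U i)
    (xstar : F → D → ℝ) (ystar : F → ℝ)
    (hxs : ∀ i j, 0 ≤ xstar i j ∧ xstar i j ≤ 1)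
    (hys : ∀ i, 0 ≤ ystar i ∧ ystar i ≤ 1)
    (y' : F → ℝ) (hy' : ∀ i, y' i = if (1 / 4 : ℝ) ≤ ystar i then 1 else ystar i)
    (I : Finset F) (hI : ∀ i, i ∈ I ↔ y' i = 1)
    (z : F → D → ℝ)
    (hz0 : ∀ i j, 0 ≤ z i j)
    (hzx : ∀ i ∈ I, ∀ j, z i j ≤ 2 * xstar i j)
    (hzoff : ∀ i ∉ I, ∀ j, z i j = 0)
    (hz1 : ∀ j, ∑ i ∈ I, z i j ≤ 1)
    (hzU : ∀ i ∈ I, ∑ j, z i j ≤ (U i : ℝ))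
    (hzmax : ∀ z' : F → D → ℝ, (∀ i j, 0 ≤ z' i j) →
      (∀ i ∈ I, ∀ j, z' i j ≤ 2 * xstar i j) →
      (∀ j, ∑ i ∈ I, z' i j ≤ 1) → (∀ i ∈ I, ∑ j, z' i j ≤ (U i : ℝ)) →
      ∑ i ∈ I, ∑ j, z' i j ≤ ∑ i ∈ I, ∑ j, z i j)
    (gstar : F → D → ℝ)
    (hgstar : ∀ i j, gstar i j =
      if InIH I z xstar i then z i j
      else if i ∈ I ∧ ¬ InDH I z xstar j then z i j else 0)
 :
    ∀ j, InDH I z xstar j →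
      1 - ∑ i, gstar i j =
          1 - ∑ i ∈ Finset.univ.filter (fun i => InIH I z xstar i), z i j ∧
      ∑ i ∈ I.filter (fun i => ¬ InIH I z xstar i), 2 * xstar i j ≤
        1 - ∑ i, gstar i j := by
  intro j hj
  have hsum : ∑ i, gstar i j =
      ∑ i ∈ Finset.univ.filter (fun i => InIH I z xstar i), z i j := by
    rw [Finset.sum_filter]
    apply Finset.sum_congr rfl
    intro i _
    rw [hgstar]
    by_cases h : InIH I z xstar i
    · simp [h]
    · simp [h, hj]
  have hrestrict : ∑ i ∈ Finset.univ.filter (fun i => InIH I z xstar i), z i j =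
      ∑ i ∈ I.filter (fun i => InIH I z xstar i), z i j := by
    symm
    apply Finset.sum_subset
    · intro i hi
      simp only [Finset.mem_filter] at hi ⊢
      exact ⟨Finset.mem_univ i, hi.2⟩
    · intro i hi hni
      simp only [Finset.mem_filter] at hi hni
      have hiI : i ∉ I := fun h => hni ⟨h, hi.2⟩
      exact hzoff i hiI j
  have key : ∀ i ∈ I.filter (fun i => ¬ InIH I z xstar i), 2 * xstar i j = z i j := by
    intro i hi
    simp only [Finset.mem_filter] at hi
    obtain ⟨hiI, hni⟩ := hi
    by_contra hne
    have hlt : z i j < 2 * xstar i j := lt_of_le_of_ne (hzx i hiI j) (Ne.symm hne)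
    obtain ⟨k, hk, hpath⟩ := hj
    exact hni ⟨k, hk, hpath.tail ⟨hiI, hlt⟩⟩
  have hsplit := Finset.sum_filter_add_sum_filter_not I
      (fun i => InIH I z xstar i) (fun i => z i j)
  have h1 := hz1 j
  refine ⟨by rw [hsum], ?_⟩
  rw [hsum, hrestrict, Finset.sum_congr rfl key]
  linarith
end
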